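/- In the LTS of the specification Efc ∪ E∞T associated with an RTM M, for all states t of M, symbols d, e ∈ D□, and δL, δR ∈ D□*: (i) [ w!e.m!L.Σ_{f∈D□} r?f.C_{t,f} ∥ T_{δL ď δR} ]_{{r,w,m}} has a deterministic internal computation to [ C_{t,dL} ∥ T_{ζL ďL e δR} ]_{{r,w,m}} if δL = ζL dL, and to [ C_{t,□} ∥ T_{□̌ e δR} ]_{{r,w,m}} if δL = ε; (ii) [ w!e.m!R.Σ_{f∈D□} r?f.C_{t,f} ∥ T_{δL ď δR} ]_{{r,w,m}} has a deterministic internal computation to [ C_{t,dR} ∥ T_{δL e ďR ζR} ]_{{r,w,m}} if δR = dR ζR, and to [ C_{t,□} ∥ T_{δL e □̌} ]_{{r,w,m}} if δR = ε. -/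

import Mathlib

namespace RTMPaper

/-! ## Labelled transition systems

An `A`-labelled transition system; transition labels are drawn from `Option A`,
where `none` plays the role of the unobservable action τ. -/

structure LTS (A : Type) where
  State : Type
  tr : State → Option A → State → Prop
  init : State
  final : Set State

namespace LTS

variable {A : Type}

/-- A τ-step. -/
def tauStep (T : LTS A) (s t : T.State) : Prop := T.tr s none t

/-- `⇒` : the reflexive–transitive closure of τ-steps. -/
def tauReach (T : LTS A) : T.State → T.State → Prop :=
  Relation.ReflTransGen T.tauStep

/-- `s —(a)→ t` : either `s —a→ t`, or `a = τ` and `s = t`. -/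
def optStep (T : LTS A) (s : T.State) (a : Option A) (t : T.State) : Prop :=
  T.tr s a t ∨ (a = none ∧ s = t)

/-- The set of outgoing transitions of a state. -/
def out (T : LTS A) (s : T.State) : Set (Option A × T.State) :=
  {p | T.tr s p.1 p.2}

def FinitelyBranching (T : LTS A) : Prop := ∀ s, (T.out s).Finite

/-- The branching degree of `T` is bounded by `B`. -/
def BranchingDegreeBoundedBy (T : LTS A) (B : ℕ) : Prop :=
  ∀ s, (T.out s).Finite ∧ (T.out s).ncard ≤ B

def BoundedlyBranching (T : LTS A) : Prop := ∃ B, T.BranchingDegreeBoundedBy B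

/-- A deterministic transition system. -/
def Deterministic (T : LTS A) : Prop :=
  (∀ s a t₁ t₂, T.tr s a t₁ → T.tr s a t₂ → t₁ = t₂) ∧
  (∀ s t, T.tr s none t → ∀ a u, T.tr s a u → a = none)

/-- Relabelling of an LTS along a map of action alphabets (τ is mapped to τ). -/
def relabel {A' : Type} (f : A → A') (T : LTS A) : LTS A' where
  State := T.State
  tr s a t := ∃ a₀ : Option A, T.tr s a₀ t ∧ a = Option.map f a₀
  init := T.init
  final := T.final

end LTS

/-! ## (Divergence-preserving) branching bisimilarity -/

structure IsBranchingBisimulation {A : Type} (T₁ T₂ : LTS A)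
    (R : T₁.State → T₂.State → Prop) : Prop where
  fwd : ∀ s₁ s₂ a s₁', R s₁ s₂ → T₁.tr s₁ a s₁' →
    ∃ s₂'' s₂', T₂.tauReach s₂ s₂'' ∧ T₂.optStep s₂'' a s₂' ∧ R s₁ s₂'' ∧ R s₁' s₂'
  bwd : ∀ s₁ s₂ a s₂', R s₁ s₂ → T₂.tr s₂ a s₂' →
    ∃ s₁'' s₁', T₁.tauReach s₁ s₁'' ∧ T₁.optStep s₁'' a s₁' ∧ R s₁'' s₂ ∧ R s₁' s₂'
  finFwd : ∀ s₁ s₂, R s₁ s₂ → s₁ ∈ T₁.final →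
    ∃ s₂', T₂.tauReach s₂ s₂' ∧ R s₁ s₂' ∧ s₂' ∈ T₂.final
  finBwd : ∀ s₁ s₂, R s₁ s₂ → s₂ ∈ T₂.final →
    ∃ s₁', T₁.tauReach s₁ s₁' ∧ R s₁' s₂ ∧ s₁' ∈ T₁.final

/-- The divergence-preservation conditions on a branching bisimulation. -/
def DivergencePreserving {A : Type} (T₁ T₂ : LTS A)
    (R : T₁.State → T₂.State → Prop) : Prop :=
  (∀ (s₂ : T₂.State) (f : ℕ → T₁.State),
      (∀ i, T₁.tauStep (f i) (f (i + 1))) → (∀ i, R (f i) s₂) →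
      ∃ s₂', Relation.TransGen T₂.tauStep s₂ s₂' ∧ ∃ i, R (f i) s₂') ∧
  (∀ (s₁ : T₁.State) (f : ℕ → T₂.State),
      (∀ i, T₂.tauStep (f i) (f (i + 1))) → (∀ i, R s₁ (f i)) →
      ∃ s₁', Relation.TransGen T₁.tauStep s₁ s₁' ∧ ∃ i, R s₁' (f i))

/-- `T₁ ≈b T₂` : branching bisimilarity. -/
def BranchingBisimilar {A : Type} (T₁ T₂ : LTS A) : Prop :=
  ∃ R, IsBranchingBisimulation T₁ T₂ R ∧ R T₁.init T₂.init

/-- `T₁ ≈Δb T₂` : divergence-preserving branching bisimilarity. -/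
def DPBranchingBisimilar {A : Type} (T₁ T₂ : LTS A) : Prop :=
  ∃ R, IsBranchingBisimulation T₁ T₂ R ∧ DivergencePreserving T₁ T₂ R ∧
    R T₁.init T₂.init

/-! ## Effective and computable transition systems -/

/-- A set of natural numbers is recursively enumerable. -/
def REset (X : Set ℕ) : Prop :=
  ∃ f : ℕ →. Unit, Partrec f ∧ ∀ n, (f n).Dom ↔ n ∈ X

/-- A (finitely branching) LTS is computable if, with respect to some injective
codings of its labels and states into ℕ, the functions `out` and `fin` are
recursive. -/
def LTS.IsComputable {A : Type} (T : LTS A) : Prop :=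
  ∃ hfb : ∀ s, (T.out s).Finite,
    ∃ (cL : Option A → ℕ) (cS : T.State → ℕ),
      Function.Injective cL ∧ Function.Injective cS ∧
      (∃ fo : ℕ → ℕ, Computable fo ∧ ∀ s,
        fo (cS s) =
          Encodable.encode
            (((hfb s).toFinset).image fun p => Nat.pair (cL p.1) (cS p.2))) ∧
      (∃ ff : ℕ → ℕ, Computable ff ∧ ∀ s,
        (s ∈ T.final → ff (cS s) = 1) ∧ (s ∉ T.final → ff (cS s) = 0))

/-- A (finitely branching) LTS is effective if, with respect to some injective
codings of its labels and states into ℕ, its transition relation and its set of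
final states are recursively enumerable. -/
def LTS.IsEffective {A : Type} (T : LTS A) : Prop :=
  T.FinitelyBranching ∧
  ∃ (cL : Option A → ℕ) (cS : T.State → ℕ),
    Function.Injective cL ∧ Function.Injective cS ∧
    REset {n | ∃ s a t, T.tr s a t ∧ n = Nat.pair (cS s) (Nat.pair (cL a) (cS t))} ∧
    REset {n | ∃ s ∈ T.final, n = cS s}

/-! ## Reactive Turing machines -/

inductive Move : Type
  | L | R
deriving DecidableEq

instance : Fintype Move where
  elems := {Move.L, Move.R}
  complete := by intro x; cases x <;> simp

/-- A tape instance: the content left of the head (nearest symbol first), the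
symbol under the head, and the content right of the head (nearest symbol
first).  Tape symbols are `Option D`, with `none` the blank symbol □. -/
structure Tape (D : Type) where
  left : List (Option D)
  head : Option D
  right : List (Option D)

def Tape.empty (D : Type) : Tape D := ⟨[], none, []⟩

/-- Write `e` at the head position and move the head in direction `m`. -/
def Tape.writeMove {D : Type} (t : Tape D) (e : Option D) : Move → Tape D
  | .L =>
    match t.left with
    | [] => ⟨[], none, e :: t.right⟩
    | x :: l => ⟨l, x, e :: t.right⟩
  | .R =>
    match t.right with
    | [] => ⟨e :: t.left, none, []⟩
    | x :: r => ⟨e :: t.left, x, r⟩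

/-- A reactive Turing machine with action symbols `A` (labels `Option A`,
`none` being τ) and data symbols `D` (tape symbols `Option D`, `none` being
the blank symbol). -/
structure RTM (A D : Type) where
  Q : Type
  [instQ : Fintype Q]
  trans : Q → Option D → Option A → Option D → Move → Q → Prop
  init : Q
  final : Set Q

attribute [instance] RTM.instQ

/-- The transition system `T(M)` associated with an RTM `M`. -/
def RTM.lts {A D : Type} (M : RTM A D) : LTS A where
  State := M.Q × Tape D
  tr c a c' := ∃ e m, M.trans c.1 c.2.head a e m c'.1 ∧ c'.2 = c.2.writeMove e m
  init := (M.init, Tape.empty D)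
  final := {c | c.1 ∈ M.final}

def RTM.Deterministic {A D : Type} (M : RTM A D) : Prop :=
  (∀ s d a e₁ m₁ t₁ e₂ m₂ t₂, M.trans s d a e₁ m₁ t₁ → M.trans s d a e₂ m₂ t₂ →
      e₁ = e₂ ∧ m₁ = m₂ ∧ t₁ = t₂) ∧
  (∀ s d e₁ m₁ t₁, M.trans s d none e₁ m₁ t₁ →
      ∀ a e₂ m₂ t₂, M.trans s d a e₂ m₂ t₂ → a = none)

/-! ## Actions over channels, and parallel composition -/

/-- Actions over a set `C` of channels with communicated values in `V`,
together with further (base) actions from `B`:  `recv c v` is `c?v`,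
`send c v` is `c!v`. -/
inductive CAct (C V B : Type) : Type
  | recv : C → V → CAct C V B
  | send : C → V → CAct C V B
  | base : B → CAct C V B
deriving DecidableEq

/-- The (possibly silent) action `a` is a communication action on one of the
channels in `C'`. -/
def IsComm {C V B : Type} (C' : Set C) : Option (CAct C V B) → Prop
  | some (.recv c _) => c ∈ C'
  | some (.send c _) => c ∈ C'
  | _ => False

/-- Parallel composition `[T₁ ∥ T₂]_{C'}` of transition systems, enforcing
communication on the channels in `C'`. -/
def parLTS {C V B : Type} (C' : Set C) (T₁ T₂ : LTS (CAct C V B)) :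
    LTS (CAct C V B) where
  State := T₁.State × T₂.State
  init := (T₁.init, T₂.init)
  final := {p | p.1 ∈ T₁.final ∧ p.2 ∈ T₂.final}
  tr p a p' :=
    ¬ IsComm C' a ∧
    ((T₁.tr p.1 a p'.1 ∧ p.2 = p'.2) ∨
     (T₂.tr p.2 a p'.2 ∧ p.1 = p'.1) ∨
     (a = none ∧ ∃ c ∈ C', ∃ d : V,
        (T₁.tr p.1 (some (.send c d)) p'.1 ∧ T₂.tr p.2 (some (.recv c d)) p'.2) ∨
        (T₁.tr p.1 (some (.recv c d)) p'.1 ∧ T₂.tr p.2 (some (.send c d)) p'.2)))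

/-- The behaviour of `sender(M)`: output the symbols of `w` one by one along
channel `cu`, then halt in a final state. -/
def outputLTS {C V B : Type} (cu : C) (w : List V) : LTS (CAct C V B) where
  State := List V
  tr s a t := ∃ d, s = d :: t ∧ a = some (.send cu d)
  init := w
  final := {([] : List V)}

/-- A concrete (syntactic, Gödel-numberable) presentation of a reactive Turing
machine: states are `Fin (n+1)`, and the transition relation is a finite set of
tuples. -/
structure RTMc (A D : Type) where
  n : ℕ
  trans : Finset (Fin (n + 1) × Option D × Option A × Option D × Move × Fin (n + 1))
  init : Fin (n + 1)
  final : Finset (Fin (n + 1))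

def RTMc.toRTM {A D : Type} (M : RTMc A D) : RTM A D where
  Q := Fin (M.n + 1)
  trans s d a e m t := (s, d, a, e, m, t) ∈ M.trans
  init := M.init
  final := (↑M.final : Set (Fin (M.n + 1)))

end RTMPaper

namespace RTMPaper

/-! ## A process calculus (TCP_τ without sequential composition) -/

/-- Process expressions: deadlock `0`, skip `1`, action prefix, alternative
composition, parallel composition (enforcing communication on a set of
channels), and names. -/
inductive PExp (C V B N : Type) : Type
  | dl : PExp C V B N
  | emp : PExp C V B N
  | pref : Option (CAct C V B) → PExp C V B N → PExp C V B N
  | alt : PExp C V B N → PExp C V B N → PExp C V B N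
  | par : Set C → PExp C V B N → PExp C V B N → PExp C V B N
  | name : N → PExp C V B N

namespace PExp

def names {C V B N : Type} : PExp C V B N → Set N
  | .dl => ∅
  | .emp => ∅
  | .pref _ p => p.names
  | .alt p q => p.names ∪ q.names
  | .par _ p q => p.names ∪ q.names
  | .name n => {n}

def mapNames {C V B N N' : Type} (f : N → N') : PExp C V B N → PExp C V B N'
  | .dl => .dl
  | .emp => .emp
  | .pref a p => .pref a (p.mapNames f)
  | .alt p q => .alt (p.mapNames f) (q.mapNames f)
  | .par C' p q => .par C' (p.mapNames f) (q.mapNames f)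
  | .name n => .name (f n)

end PExp

/-- A recursive specification over the names `N` is a partial map from names to
process expressions (the defining equations). -/
def SpecWF {C V B N : Type} (E : N → Option (PExp C V B N)) : Prop :=
  ∀ n p, E n = some p → ∀ m ∈ PExp.names p, (E m).isSome

/-- All names occurring in `p` have a defining equation in `E`. -/
def DefinedIn {C V B N : Type} (E : N → Option (PExp C V B N))
    (p : PExp C V B N) : Prop :=
  ∀ m ∈ PExp.names p, (E m).isSome

/-- The termination predicate `↓` of the structural operational semantics. -/
inductive Term {C V B N : Type} (E : N → Option (PExp C V B N)) :
    PExp C V B N → Prop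
  | emp : Term E .emp
  | altL {p q} : Term E p → Term E (.alt p q)
  | altR {p q} : Term E q → Term E (.alt p q)
  | par {C' p q} : Term E p → Term E q → Term E (.par C' p q)
  | name {n p} : E n = some p → Term E p → Term E (.name n)

/-- The transition relation of the structural operational semantics. -/
inductive Step {C V B N : Type} (E : N → Option (PExp C V B N)) :
    PExp C V B N → Option (CAct C V B) → PExp C V B N → Prop
  | pref {a p} : Step E (.pref a p) a p
  | altL {p q a p'} : Step E p a p' → Step E (.alt p q) a p'
  | altR {p q a q'} : Step E q a q' → Step E (.alt p q) a q'
  | parL {C' p q a p'} : Step E p a p' → ¬ IsComm C' a →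
      Step E (.par C' p q) a (.par C' p' q)
  | parR {C' p q a q'} : Step E q a q' → ¬ IsComm C' a →
      Step E (.par C' p q) a (.par C' p q')
  | syncSR {C' : Set C} {p q p' q' c d} : c ∈ C' →
      Step E p (some (.send c d)) p' → Step E q (some (.recv c d)) q' →
      Step E (.par C' p q) none (.par C' p' q')
  | syncRS {C' : Set C} {p q p' q' c d} : c ∈ C' →
      Step E p (some (.recv c d)) p' → Step E q (some (.send c d)) q' →
      Step E (.par C' p q) none (.par C' p' q')
  | name {n p a p'} : E n = some p → Step E p a p' → Step E (.name n) a p'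

/-- The process expressions reachable from `p` under the semantics of `E`. -/
def Reach {C V B N : Type} (E : N → Option (PExp C V B N))
    (p : PExp C V B N) : Set (PExp C V B N) :=
  {q | Relation.ReflTransGen (fun x y => ∃ a, Step E x a y) p q}

/-- The transition system `T_E(p)` associated with the process expression `p`
and the recursive specification `E`. -/
def pLTS {C V B N : Type} (E : N → Option (PExp C V B N))
    (p : PExp C V B N) : LTS (CAct C V B) where
  State := {q // q ∈ Reach E p}
  tr s a t := Step E s.1 a t.1
  init := ⟨p, Relation.ReflTransGen.refl⟩
  final := {s | Term E s.1}

/-- A deterministic internal computation from `s` to `s'` with respect to a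
transition relation `tr`. -/
def DetInternalComp {S A : Type} (tr : S → Option A → S → Prop)
    (s s' : S) : Prop :=
  ∃ (n : ℕ) (f : ℕ → S), f 0 = s ∧ f n = s' ∧
    (∀ i < n, tr (f i) none (f (i + 1))) ∧
    (∀ i < n, ∀ a u, tr (f i) a u → a = none ∧ u = f (i + 1))

/-! ### Finite sums of process expressions -/

def bigAlt {C V B N : Type} (l : List (PExp C V B N)) : PExp C V B N :=
  l.foldr PExp.alt PExp.dl

/-- `Σ_{x ∈ l} f x`. -/
def sumList {C V B N ι : Type} (l : List ι) (f : ι → PExp C V B N) :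
    PExp C V B N :=
  bigAlt (l.map f)

/-- The list of all elements of a finite type. -/
noncomputable def allOf (ι : Type) [Fintype ι] : List ι := Finset.univ.toList

/-- The disjoint union of two recursive specifications. -/
def combineSpec {C V B N₁ N₂ : Type}
    (E₁ : N₁ → Option (PExp C V B N₁)) (E₂ : N₂ → Option (PExp C V B N₂)) :
    N₁ ⊕ N₂ → Option (PExp C V B (N₁ ⊕ N₂))
  | .inl n => (E₁ n).map (PExp.mapNames Sum.inl)
  | .inr n => (E₂ n).map (PExp.mapNames Sum.inr)

/-! ### Queue specifications -/

/-- The infinite specification `E∞Q` of a FIFO queue over the alphabet `al`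
with input channel `ci` and output channel `co`; the name of a state of the
queue is its contents (a string, insertion at the left, removal at the
right). -/
def infQueueSpec (C B V : Type) (al : List V) (ci co : C) :
    List V → Option (PExp C V B (List V)) := fun l =>
  some <|
    match l.getLast? with
    | none =>
        .alt (sumList al fun d => .pref (some (.recv ci d)) (.name [d])) .emp
    | some d =>
        .alt (.alt (.pref (some (.send co d)) (.name l.dropLast))
          (sumList al fun e => .pref (some (.recv ci e)) (.name (e :: l)))) .emp

/-- The finite Bergstra–Klop queue specification `EQ` (with added `1`-summands):
for channels `(j,k,p)`,
`Q^{jk}_p ≝ Σ_d j?d.[ Q^{jp}_k ∥ (1 + k!d.Q^{pk}_j) ]_{{p}} + 1`. -/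
def bkQueueSpec (C B V : Type) (al : List V) :
    C × C × C → Option (PExp C V B (C × C × C)) := fun jkp =>
  some <| .alt
    (sumList al fun d => .pref (some (.recv jkp.1 d))
      (.par {jkp.2.2} (.name (jkp.1, jkp.2.2, jkp.2.1))
        (.alt .emp (.pref (some (.send jkp.2.1 d)) (.name (jkp.2.2, jkp.2.1, jkp.1))))))
    .emp

/-! ### Tape specifications -/

/-- Symbols communicated in the tape/queue specifications: tape symbols
(`dat d` for `d ∈ D□`), the fresh symbols `⊥` and `$`, and the move
instructions `L` and `R`. -/
inductive Sym (D : Type) : Type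
  | dat : Option D → Sym D
  | bot : Sym D
  | dollar : Sym D
  | mvL : Sym D
  | mvR : Sym D
deriving DecidableEq

instance {D : Type} [Fintype D] [DecidableEq D] : Fintype (Sym D) where
  elems := ((Finset.univ : Finset (Option D)).image Sym.dat) ∪
    {Sym.bot, Sym.dollar, Sym.mvL, Sym.mvR}
  complete := by intro x; cases x <;> simp

/-- The queue alphabet `D□ ∪ {⊥, $}`. -/
noncomputable def qAlphList (D : Type) [Fintype D] [DecidableEq D] : List (Sym D) :=
  ((Finset.univ : Finset (Sym D)).filter fun v => v ≠ Sym.mvL ∧ v ≠ Sym.mvR).toList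

def dmap {D : Type} (l : List (Option D)) : List (Sym D) := l.map Sym.dat

def movSym {D : Type} : Move → Sym D
  | .L => .mvL
  | .R => .mvR

/-- Names of the finite tape-controller specification `ET`. -/
inductive TName (D : Type) : Type
  | H : Option D → TName D
  | HL : Option D → TName D
  | HR : Option D → TName D
  | Back : TName D
  | Fwd : Option D → TName D
  | FwdBot : TName D

/-- The finite tape-controller specification `ET`, with read channel `cr`,
write channel `cw`, move channel `cm`, and a queue interface on channels
`ci` (insert) and `co` (remove). -/
noncomputable def tapeCtrlSpec (C D B : Type) [Fintype D] (ci co cr cw cm : C) :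
    TName D → Option (PExp C (Sym D) B (TName D))
  | .H d => some <| .alt (.alt (.alt (.alt
      (.pref (some (.send cr (.dat d))) (.name (.H d)))
      (sumList (allOf (Option D)) fun e =>
        .pref (some (.recv cw (.dat e))) (.name (.H e))))
      (.pref (some (.recv cm .mvL)) (.name (.HL d))))
      (.pref (some (.recv cm .mvR)) (.name (.HR d))))
      .emp
  | .HL d => some <| .pref (some (.send ci (.dat d)))
      (.alt (sumList (allOf (Option D)) fun e =>
          .pref (some (.recv co (.dat e))) (.name (.H e)))
        (.pref (some (.recv co .bot))
          (.pref (some (.send ci .dollar))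
            (.pref (some (.send ci .bot)) (.name .Back)))))
  | .Back => some <| .alt
      (sumList (allOf (Option D)) fun d =>
        .pref (some (.recv co (.dat d)))
          (.pref (some (.send ci (.dat d))) (.name .Back)))
      (.pref (some (.recv co .dollar)) (.name (.H none)))
  | .HR d => some <| .pref (some (.send ci .dollar))
      (.pref (some (.send ci (.dat d)))
        (.alt (sumList (allOf (Option D)) fun e =>
            .pref (some (.recv co (.dat e))) (.name (.Fwd e)))
          (.pref (some (.recv co .bot)) (.name .FwdBot))))
  | .Fwd d => some <| .alt (.alt
      (sumList (allOf (Option D)) fun e =>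
        .pref (some (.recv co (.dat e)))
          (.pref (some (.send ci (.dat d))) (.name (.Fwd e))))
      (.pref (some (.recv co .bot))
        (.pref (some (.send ci (.dat d))) (.name .FwdBot))))
      (.pref (some (.recv co .dollar)) (.name (.H d)))
  | .FwdBot => some <| .alt
      (sumList (allOf (Option D)) fun e =>
        .pref (some (.recv co (.dat e)))
          (.pref (some (.send ci .bot)) (.name (.Fwd e))))
      (.pref (some (.recv co .dollar))
        (.pref (some (.send ci .bot)) (.name (.H none))))

/-- The infinite tape specification `E∞T`: one name for every tape instance,
with read channel `cr`, write channel `cw` and move channel `cm`. -/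
noncomputable def infTapeSpec (C B D : Type) [Fintype D] (cr cw cm : C) :
    Tape D → Option (PExp C (Sym D) B (Tape D)) := fun t =>
  some <| .alt (.alt (.alt (.alt
    (.pref (some (.send cr (.dat t.head))) (.name t))
    (sumList (allOf (Option D)) fun e =>
      .pref (some (.recv cw (.dat e))) (.name ⟨t.left, e, t.right⟩)))
    (.pref (some (.recv cm .mvL)) (.name (t.writeMove t.head .L))))
    (.pref (some (.recv cm .mvR)) (.name (t.writeMove t.head .R))))
    .emp

/-- The finite-control specification `Efc` of an RTM `M`:
`C_{s,d} ≝ Σ_{(s,d,a,e,Mv,t) ∈ →} a.w!e.m!Mv.Σ_{f∈D□} r?f.C_{t,f}`,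
with an additional summand `1` iff `s` is a final state of `M`. -/
noncomputable def fcSpec {C D B : Type} [Fintype D] [Fintype B]
    (M : RTM B D) (cr cw cm : C) :
    M.Q × Option D → Option (PExp C (Sym D) B (M.Q × Option D)) := fun sd =>
  let base : PExp C (Sym D) B (M.Q × Option D) :=
    bigAlt ((((Set.toFinite {x : Option B × Option D × Move × M.Q |
        M.trans sd.1 sd.2 x.1 x.2.1 x.2.2.1 x.2.2.2}).toFinset).toList).map fun x =>
      .pref (Option.map CAct.base x.1)
        (.pref (some (.send cw (.dat x.2.1)))
          (.pref (some (.send cm (movSym x.2.2.1)))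
            (sumList (allOf (Option D)) fun f =>
              .pref (some (.recv cr (.dat f))) (.name (x.2.2.2, f))))))
  haveI := Classical.propDecidable (sd.1 ∈ M.final)
  some (if sd.1 ∈ M.final then .alt base .emp else base)

end RTMPaper

namespace RTMPaper

/-- The finite-control specification of the RTM `M` combined with the infinite
tape specification. -/
noncomputable def EfcT {C D B : Type} [Fintype D] [Fintype B]
    (M : RTM B D) (cr cw cm : C) :
    ((M.Q × Option D) ⊕ Tape D) →
      Option (PExp C (Sym D) B ((M.Q × Option D) ⊕ Tape D)) :=
  combineSpec (fcSpec M cr cw cm) (infTapeSpec C B D cr cw cm)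

/-! In each of the three states of the computation, the next action of the control
(`w!e`, then `m!Mv`, then `r?f`) and every action of the tape are communications on
`{r, w, m}`, so neither component moves on its own. Direction and communicated value
(a data symbol or a move instruction) leave exactly one tape action complementary to the
control's, so the unique transition is that synchronisation. -/

namespace DetInternalComp

variable {S A : Type} {tr : S → Option A → S → Prop}

theorem refl (s : S) : DetInternalComp tr s s :=
  ⟨0, fun _ => s, rfl, rfl, by simp, by simp⟩

theorem head {s s' s'' : S} (hs : ∀ a u, tr s a u ↔ a = none ∧ u = s')
    (h : DetInternalComp tr s' s'') : DetInternalComp tr s s'' := by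
  obtain ⟨n, f, h0, hn, hstep, hdet⟩ := h
  refine ⟨n + 1, fun i => Nat.casesOn i s f, rfl, hn, ?_, ?_⟩
  · rintro (_ | i) hi
    · exact (hs _ _).2 ⟨rfl, h0⟩
    · exact hstep i (by omega)
  · rintro (_ | i) hi a u hu
    · simpa [h0] using (hs a u).1 hu
    · exact hdet i (by omega) a u hu

end DetInternalComp

theorem mem_allOf {ι : Type} [Fintype ι] (x : ι) : x ∈ allOf ι := by
  simp [allOf]

theorem PExp.mapNames_sumList {C V B N N' ι : Type} (f : N → N') (l : List ι)
    (g : ι → PExp C V B N) :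
    (sumList l g).mapNames f = sumList l fun x => (g x).mapNames f := by
  induction l with
  | nil => rfl
  | cons x l ih => exact congrArg (PExp.alt _) ih

section Step

variable {C V B N : Type} {E : N → Option (PExp C V B N)}

theorem not_step_dl {a q} : ¬ Step E .dl a q := nofun

theorem not_step_emp {a q} : ¬ Step E .emp a q := nofun

theorem step_pref_iff {a b p q} : Step E (.pref a p) b q ↔ b = a ∧ q = p := by
  constructor
  · rintro ⟨⟩; exact ⟨rfl, rfl⟩
  · rintro ⟨rfl, rfl⟩; exact .pref

theorem step_alt_iff {p q a r} : Step E (.alt p q) a r ↔ Step E p a r ∨ Step E q a r := by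
  constructor
  · intro h
    cases h with
    | altL h => exact .inl h
    | altR h => exact .inr h
  · rintro (h | h)
    · exact .altL h
    · exact .altR h

theorem step_name_iff {n p a q} (hn : E n = some p) : Step E (.name n) a q ↔ Step E p a q := by
  constructor
  · intro h
    cases h with
    | name hn' h => cases hn.symm.trans hn'; exact h
  · exact .name hn

theorem step_bigAlt_iff {l : List (PExp C V B N)} {a q} :
    Step E (bigAlt l) a q ↔ ∃ p ∈ l, Step E p a q := by
  induction l with
  | nil => simp [bigAlt, not_step_dl]
  | cons p l ih => simp_all [bigAlt, step_alt_iff]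

theorem step_sumList_iff {ι : Type} {l : List ι} {g : ι → PExp C V B N} {a q} :
    Step E (sumList l g) a q ↔ ∃ x ∈ l, Step E (g x) a q := by
  simp [sumList, step_bigAlt_iff]

theorem step_par_iff_of_isComm {C' : Set C} {p q r a}
    (hp : ∀ b p', Step E p b p' → IsComm C' b) (hq : ∀ b q', Step E q b q' → IsComm C' b) :
    Step E (.par C' p q) a r ↔ a = none ∧ ∃ c ∈ C', ∃ d p' q', r = .par C' p' q' ∧
      ((Step E p (some (.send c d)) p' ∧ Step E q (some (.recv c d)) q') ∨
       (Step E p (some (.recv c d)) p' ∧ Step E q (some (.send c d)) q')) := by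
  constructor
  · intro h
    cases h with
    | parL h hn => exact absurd (hp _ _ h) hn
    | parR h hn => exact absurd (hq _ _ h) hn
    | syncSR hc hl hr => exact ⟨rfl, _, hc, _, _, _, rfl, .inl ⟨hl, hr⟩⟩
    | syncRS hc hl hr => exact ⟨rfl, _, hc, _, _, _, rfl, .inr ⟨hl, hr⟩⟩
  · rintro ⟨rfl, c, hc, d, p', q', rfl, ⟨hl, hr⟩ | ⟨hl, hr⟩⟩
    · exact .syncSR hc hl hr
    · exact .syncRS hc hl hr

end Step

section Tape

variable {C D B : Type} [Fintype D] [Fintype B] {M : RTM B D} {cr cw cm : C}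

theorem EfcT_inr (T : Tape D) :
    EfcT (C := C) M cr cw cm (.inr T) = some
      (.alt (.alt (.alt (.alt
        (.pref (some (.send cr (.dat T.head))) (.name (.inr T)))
        (sumList (allOf (Option D)) fun f =>
          .pref (some (.recv cw (.dat f))) (.name (.inr ⟨T.left, f, T.right⟩))))
        (.pref (some (.recv cm .mvL)) (.name (.inr (T.writeMove T.head .L)))))
        (.pref (some (.recv cm .mvR)) (.name (.inr (T.writeMove T.head .R)))))
        .emp) := by
  simp only [EfcT, combineSpec, infTapeSpec, Option.map_some, PExp.mapNames,
    PExp.mapNames_sumList]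

theorem step_tape_iff {T : Tape D} {a} {q : PExp C (Sym D) B ((M.Q × Option D) ⊕ Tape D)} :
    Step (EfcT M cr cw cm) (.name (.inr T)) a q ↔
      (a = some (.send cr (.dat T.head)) ∧ q = .name (.inr T)) ∨
      (∃ f, a = some (.recv cw (.dat f)) ∧ q = .name (.inr ⟨T.left, f, T.right⟩)) ∨
      (a = some (.recv cm .mvL) ∧ q = .name (.inr (T.writeMove T.head .L))) ∨
      (a = some (.recv cm .mvR) ∧ q = .name (.inr (T.writeMove T.head .R))) := by
  simp only [step_name_iff (EfcT_inr T), step_alt_iff, step_pref_iff, step_sumList_iff,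
    mem_allOf, true_and, not_step_emp, or_false, or_assoc]

theorem isComm_of_step_tape {T : Tape D} {a}
    {q : PExp C (Sym D) B ((M.Q × Option D) ⊕ Tape D)}
    (h : Step (EfcT M cr cw cm) (.name (.inr T)) a q) : IsComm {cr, cw, cm} a := by
  rcases step_tape_iff.1 h with ⟨rfl, -⟩ | ⟨f, rfl, -⟩ | ⟨rfl, -⟩ | ⟨rfl, -⟩ <;> simp [IsComm]

end Tape

section Interaction

variable {C D B : Type} [Fintype D] [Fintype B] {M : RTM B D} {cr cw cm : C}

theorem step_write_iff (e : Option D)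
    (p : PExp C (Sym D) B ((M.Q × Option D) ⊕ Tape D)) (T : Tape D) (a u) :
    Step (EfcT M cr cw cm)
      (.par {cr, cw, cm} (.pref (some (.send cw (.dat e))) p) (.name (.inr T))) a u ↔
    a = none ∧ u = .par {cr, cw, cm} p (.name (.inr ⟨T.left, e, T.right⟩)) := by
  rw [step_par_iff_of_isComm (fun b p' h => by simp [(step_pref_iff.1 h).1, IsComm])
    (fun _ _ => isComm_of_step_tape)]
  simp +contextual [step_pref_iff, step_tape_iff]

theorem step_move_iff (Mv : Move)
    (p : PExp C (Sym D) B ((M.Q × Option D) ⊕ Tape D)) (T : Tape D) (a u) :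
    Step (EfcT M cr cw cm)
      (.par {cr, cw, cm} (.pref (some (.send cm (movSym Mv))) p) (.name (.inr T))) a u ↔
    a = none ∧ u = .par {cr, cw, cm} p (.name (.inr (T.writeMove T.head Mv))) := by
  rw [step_par_iff_of_isComm (fun b p' h => by simp [(step_pref_iff.1 h).1, IsComm])
    (fun _ _ => isComm_of_step_tape)]
  cases Mv <;> simp +contextual [step_pref_iff, step_tape_iff, movSym]

theorem step_read_iff (t : M.Q) (T : Tape D) (a u) :
    Step (EfcT M cr cw cm)
      (.par {cr, cw, cm}
        (sumList (allOf (Option D)) fun f =>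
          .pref (some (.recv cr (.dat f))) (.name (.inl (t, f))))
        (.name (.inr T))) a u ↔
    a = none ∧ u = .par {cr, cw, cm} (.name (.inl (t, T.head))) (.name (.inr T)) := by
  rw [step_par_iff_of_isComm
    (fun b p' h => by
      obtain ⟨f, -, h⟩ := step_sumList_iff.1 h
      simp [(step_pref_iff.1 h).1, IsComm])
    (fun _ _ => isComm_of_step_tape)]
  simp [step_sumList_iff, mem_allOf, step_pref_iff, step_tape_iff]

theorem detInternalComp_write_move_read (t : M.Q) (e : Option D) (Mv : Move) (T : Tape D) :
    DetInternalComp (Step (EfcT M cr cw cm))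
      (.par {cr, cw, cm}
        (.pref (some (.send cw (.dat e))) (.pref (some (.send cm (movSym Mv)))
          (sumList (allOf (Option D)) fun f =>
            .pref (some (.recv cr (.dat f))) (.name (.inl (t, f))))))
        (.name (.inr T)))
      (.par {cr, cw, cm} (.name (.inl (t, (T.writeMove e Mv).head)))
        (.name (.inr (T.writeMove e Mv)))) :=
  .head (step_write_iff _ _ _) <| .head (step_move_iff _ _ _) <|
    .head (step_read_iff _ _) <| .refl _

end Interaction

theorem finite_control_tape_interaction_general
    {C D B : Type} [Fintype D] [Fintype B] (cr cw cm : C)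
    (M : RTM B D) (t : M.Q) (d e : Option D) (δL δR : List (Option D)) :
    (∀ (ζL : List (Option D)) (dL : Option D), δL = ζL ++ [dL] →
      DetInternalComp (Step (EfcT (C := C) M cr cw cm))
        (.par {cr, cw, cm}
          (.pref (some (.send cw (Sym.dat e))) (.pref (some (.send cm Sym.mvL))
            (sumList (allOf (Option D)) fun f =>
              .pref (some (.recv cr (Sym.dat f))) (.name (.inl (t, f))))))
          (.name (.inr (⟨δL.reverse, d, δR⟩ : Tape D))))
        (.par {cr, cw, cm} (.name (.inl (t, dL)))
          (.name (.inr (⟨ζL.reverse, dL, e :: δR⟩ : Tape D))))) ∧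
    (δL = [] →
      DetInternalComp (Step (EfcT (C := C) M cr cw cm))
        (.par {cr, cw, cm}
          (.pref (some (.send cw (Sym.dat e))) (.pref (some (.send cm Sym.mvL))
            (sumList (allOf (Option D)) fun f =>
              .pref (some (.recv cr (Sym.dat f))) (.name (.inl (t, f))))))
          (.name (.inr (⟨δL.reverse, d, δR⟩ : Tape D))))
        (.par {cr, cw, cm} (.name (.inl (t, (none : Option D))))
          (.name (.inr (⟨[], none, e :: δR⟩ : Tape D))))) ∧
    (∀ (dR : Option D) (ζR : List (Option D)), δR = dR :: ζR →
      DetInternalComp (Step (EfcT (C := C) M cr cw cm))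
        (.par {cr, cw, cm}
          (.pref (some (.send cw (Sym.dat e))) (.pref (some (.send cm Sym.mvR))
            (sumList (allOf (Option D)) fun f =>
              .pref (some (.recv cr (Sym.dat f))) (.name (.inl (t, f))))))
          (.name (.inr (⟨δL.reverse, d, δR⟩ : Tape D))))
        (.par {cr, cw, cm} (.name (.inl (t, dR)))
          (.name (.inr (⟨e :: δL.reverse, dR, ζR⟩ : Tape D))))) ∧
    (δR = [] →
      DetInternalComp (Step (EfcT (C := C) M cr cw cm))
        (.par {cr, cw, cm}
          (.pref (some (.send cw (Sym.dat e))) (.pref (some (.send cm Sym.mvR))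
            (sumList (allOf (Option D)) fun f =>
              .pref (some (.recv cr (Sym.dat f))) (.name (.inl (t, f))))))
          (.name (.inr (⟨δL.reverse, d, δR⟩ : Tape D))))
        (.par {cr, cw, cm} (.name (.inl (t, (none : Option D))))
          (.name (.inr (⟨e :: δL.reverse, none, []⟩ : Tape D))))) := by
  refine ⟨?_, ?_, ?_, ?_⟩
  · rintro ζL dL rfl
    rw [List.reverse_append]
    exact detInternalComp_write_move_read t e .L _
  · rintro rfl
    exact detInternalComp_write_move_read t e .L _
  · rintro dR ζR rfl
    exact detInternalComp_write_move_read t e .R _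
  · rintro rfl
    exact detInternalComp_write_move_read t e .R _

/-- The write/move/read interaction of the finite control of
an RTM `M` with the tape process gives rise to deterministic internal
computations in the LTS of the specification `Efc ∪ E∞T`. -/
theorem finite_control_tape_interaction
    {C D B : Type} [Fintype D] [Fintype B] (cr cw cm : C)
    (hdist : List.Pairwise (· ≠ ·) [cr, cw, cm])
    (M : RTM B D) (t : M.Q) (d e : Option D) (δL δR : List (Option D)) :
    (∀ (ζL : List (Option D)) (dL : Option D), δL = ζL ++ [dL] →
      DetInternalComp (Step (EfcT (C := C) M cr cw cm))
        (.par {cr, cw, cm}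
          (.pref (some (.send cw (Sym.dat e))) (.pref (some (.send cm Sym.mvL))
            (sumList (allOf (Option D)) fun f =>
              .pref (some (.recv cr (Sym.dat f))) (.name (.inl (t, f))))))
          (.name (.inr (⟨δL.reverse, d, δR⟩ : Tape D))))
        (.par {cr, cw, cm} (.name (.inl (t, dL)))
          (.name (.inr (⟨ζL.reverse, dL, e :: δR⟩ : Tape D))))) ∧
    (δL = [] →
      DetInternalComp (Step (EfcT (C := C) M cr cw cm))
        (.par {cr, cw, cm}
          (.pref (some (.send cw (Sym.dat e))) (.pref (some (.send cm Sym.mvL))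
            (sumList (allOf (Option D)) fun f =>
              .pref (some (.recv cr (Sym.dat f))) (.name (.inl (t, f))))))
          (.name (.inr (⟨δL.reverse, d, δR⟩ : Tape D))))
        (.par {cr, cw, cm} (.name (.inl (t, (none : Option D))))
          (.name (.inr (⟨[], none, e :: δR⟩ : Tape D))))) ∧
    (∀ (dR : Option D) (ζR : List (Option D)), δR = dR :: ζR →
      DetInternalComp (Step (EfcT (C := C) M cr cw cm))
        (.par {cr, cw, cm}
          (.pref (some (.send cw (Sym.dat e))) (.pref (some (.send cm Sym.mvR))
            (sumList (allOf (Option D)) fun f =>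
              .pref (some (.recv cr (Sym.dat f))) (.name (.inl (t, f))))))
          (.name (.inr (⟨δL.reverse, d, δR⟩ : Tape D))))
        (.par {cr, cw, cm} (.name (.inl (t, dR)))
          (.name (.inr (⟨e :: δL.reverse, dR, ζR⟩ : Tape D))))) ∧
    (δR = [] →
      DetInternalComp (Step (EfcT (C := C) M cr cw cm))
        (.par {cr, cw, cm}
          (.pref (some (.send cw (Sym.dat e))) (.pref (some (.send cm Sym.mvR))
            (sumList (allOf (Option D)) fun f =>
              .pref (some (.recv cr (Sym.dat f))) (.name (.inl (t, f))))))
          (.name (.inr (⟨δL.reverse, d, δR⟩ : Tape D))))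
        (.par {cr, cw, cm} (.name (.inl (t, (none : Option D))))
          (.name (.inr (⟨e :: δL.reverse, none, []⟩ : Tape D))))) :=
  finite_control_tape_interaction_general cr cw cm M t d e δL δR

end RTMPaper
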